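/- Let D be an integral domain and * a stable star operation on D such that D is *-sharp. Then every finitely generated nonzero ideal of D is *-invertible. -/

import Mathlib

/-!
Induction on the number of generators reduces the claim to: if `α, β` are integral, `*`-closed
and `*`-invertible, then so is `α + β`.

Sharpness applied to `X · xX⁻¹ ⊆ (x)`, for `0 ≠ x ∈ X`, shows that every integral divisorial
ideal `X` is `*`-invertible. This applies to `α ∩ β`, hence also to `W = (α + β)⁻¹`, which has
the same `*`-closure as `(α ∩ β) α⁻¹ β⁻¹`. Then `p = (βW)*` and `q = (αW)*` are integral,
`*`-invertible and v-coprime, and it remains to see `(p + q)* = D`.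

For v-coprime `*`-invertible ideals `p ∩ q ⊆ (pq)*`. Sharpness applied to `q · q ⊆ q² + p`
gives `(q² + p)* = (HJ)*` with `q ⊆ H*, J*`; intersecting `Hq, Jq ⊆ (q² + p)*` with `q` (by
stability) and cancelling `q` gives `H, J ⊆ (p + q)*`, so `p ⊆ ((p + q)²)*`. Intersecting this
with `p` and cancelling `p` gives `D ⊆ (p + q)*`.
-/

open scoped nonZeroDivisors

/-- A star operation on an integral domain `D` with quotient field `K`: a map
`I ↦ I*` on (nonzero) fractional ideals such that `D* = D`, `(aI)* = a·I*`,
`I ⊆ I*`, `I ⊆ J → I* ⊆ J*` and `(I*)* = I*`. (The value at `0` is irrelevant.) -/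
structure StarOperation (D K : Type*) [CommRing D] [IsDomain D] [Field K]
    [Algebra D K] [IsFractionRing D K] where
  star : FractionalIdeal D⁰ K → FractionalIdeal D⁰ K
  star_one : star 1 = 1
  star_smul : ∀ (a : K), a ≠ 0 → ∀ I : FractionalIdeal D⁰ K, I ≠ 0 →
    star (FractionalIdeal.spanSingleton D⁰ a * I) = FractionalIdeal.spanSingleton D⁰ a * star I
  le_star : ∀ I : FractionalIdeal D⁰ K, I ≠ 0 → I ≤ star I
  star_mono : ∀ I J : FractionalIdeal D⁰ K, I ≠ 0 → J ≠ 0 → I ≤ J → star I ≤ star J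
  star_star : ∀ I : FractionalIdeal D⁰ K, I ≠ 0 → star (star I) = star I

section StarSharpDefs

variable {D K : Type*} [CommRing D] [IsDomain D] [Field K] [Algebra D K] [IsFractionRing D K]

/-- `D` is sharp with respect to the operation `star` ("`*`-sharp"): whenever
`I ⊇ A·B` for nonzero ideals `I, A, B` of `D`, there exist nonzero ideals `H, J`
with `I* = (HJ)*`, `H* ⊇ A` and `J* ⊇ B`. -/
def IsSharpOp (star : FractionalIdeal D⁰ K → FractionalIdeal D⁰ K) : Prop :=
  ∀ I A B : Ideal D, I ≠ 0 → A ≠ 0 → B ≠ 0 → A * B ≤ I →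
    ∃ H J : Ideal D, H ≠ 0 ∧ J ≠ 0 ∧
      star (I : FractionalIdeal D⁰ K) =
        star ((H : FractionalIdeal D⁰ K) * (J : FractionalIdeal D⁰ K)) ∧
      (A : FractionalIdeal D⁰ K) ≤ star (H : FractionalIdeal D⁰ K) ∧
      (B : FractionalIdeal D⁰ K) ≤ star (J : FractionalIdeal D⁰ K)

/-- `D` is `*`-sharp for the star operation `s`. -/
def StarOperation.IsSharp (s : StarOperation D K) : Prop :=
  IsSharpOp s.star

/-- A star operation is stable if it distributes over (finite) intersections of
nonzero fractional ideals. -/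
def StarOperation.IsStable (s : StarOperation D K) : Prop :=
  ∀ I J : FractionalIdeal D⁰ K, I ≠ 0 → J ≠ 0 → s.star (I ⊓ J) = s.star I ⊓ s.star J

end StarSharpDefs

namespace FractionalIdeal

section General

variable {R : Type*} [CommRing R] {S : Submonoid R} {P : Type*} [CommRing P] [Algebra R P]
  {I J : FractionalIdeal S P}

theorem ne_zero_of_mem {x : P} (hx : x ∈ I) (hx0 : x ≠ 0) : I ≠ 0 :=
  fun h => hx0 ((mem_zero_iff S).mp (h ▸ hx))

theorem ne_zero_of_le (hI : I ≠ 0) (h : I ≤ J) : J ≠ 0 :=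
  ne_bot_of_le_ne_bot hI h

instance : IsModularLattice (FractionalIdeal S P) where
  sup_inf_le_assoc_of_le y {x z} h := by
    rw [← coe_le_coe, coe_inf, coe_sup, coe_sup, coe_inf]
    exact IsModularLattice.sup_inf_le_assoc_of_le _ (coe_le_coe.mpr h)

/-- `(p + q)⁻¹ ⊆ D`; for integral `p, q` this says `(p + q)_v = D`. -/
def IsVCoprime (p q : FractionalIdeal S P) : Prop :=
  ∀ Z : FractionalIdeal S P, Z * p ≤ 1 → Z * q ≤ 1 → Z ≤ 1

theorem IsVCoprime.symm {p q : FractionalIdeal S P} (h : IsVCoprime p q) : IsVCoprime q p :=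
  fun Z hZq hZp => h Z hZp hZq

theorem IsVCoprime.mul_self_right {p q : FractionalIdeal S P} (h : IsVCoprime p q)
    (hq : q ≤ 1) : IsVCoprime p (q * q) := by
  intro Z hZp hZqq
  refine h Z hZp (h (Z * q) ?_ (by rwa [mul_assoc]))
  calc Z * q * p = Z * p * q := mul_right_comm _ _ _
    _ ≤ 1 := mul_le_one' hZp hq

end General

variable {D K : Type*} [CommRing D] [IsDomain D] [Field K] [Algebra D K] [IsFractionRing D K]
  {I J : FractionalIdeal D⁰ K}

instance : NoZeroDivisors (FractionalIdeal D⁰ K) where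
  eq_zero_or_eq_zero_of_mul_eq_zero {I J} hIJ := by
    by_contra! h
    obtain ⟨x, hx0, hx⟩ := exists_ne_zero_mem_isInteger h.1
    obtain ⟨y, hy0, hy⟩ := exists_ne_zero_mem_isInteger h.2
    exact ne_zero_of_mem (mul_mem_mul hx hy) (by simp [hx0, hy0]) hIJ

theorem inf_ne_zero (hI : I ≠ 0) (hJ : J ≠ 0) : I ⊓ J ≠ 0 := by
  obtain ⟨x, hx0, hx⟩ := exists_ne_zero_mem_isInteger hI
  obtain ⟨y, hy0, hy⟩ := exists_ne_zero_mem_isInteger hJ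
  refine ne_zero_of_mem (x := algebraMap D K (x * y)) ⟨?_, ?_⟩ (by simp [hx0, hy0])
  · rw [mul_comm, map_mul, ← Algebra.smul_def]
    exact Submodule.smul_mem _ y hx
  · rw [map_mul, ← Algebra.smul_def]
    exact Submodule.smul_mem _ x hy

theorem inv_ne_zero (hI : I ≠ 0) : I⁻¹ ≠ 0 :=
  ne_zero_of_mem (den_mem_inv hI) (IsFractionRing.to_map_ne_zero_of_mem_nonZeroDivisors I.den.2)

theorem mul_inv_le_one (I : FractionalIdeal D⁰ K) : I * I⁻¹ ≤ 1 :=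
  mul_one_div_le_one

theorem le_inv_iff_mul_le (hJ : J ≠ 0) : I ≤ J⁻¹ ↔ I * J ≤ 1 :=
  le_div_iff_mul_le hJ

theorem inv_inv_mono (hI : I ≠ 0) (h : I ≤ J) : I⁻¹⁻¹ ≤ J⁻¹⁻¹ :=
  inv_anti_mono (inv_ne_zero (ne_zero_of_le hI h)) (inv_ne_zero hI)
    (inv_anti_mono hI (ne_zero_of_le hI h) h)

theorem le_spanSingleton_mul_inv {x : K} (hx : x ≠ 0) (hI : I ≠ 0)
    (h : J * I ≤ spanSingleton D⁰ x) : J ≤ spanSingleton D⁰ x * I⁻¹ := by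
  have hu := spanSingleton_mul_inv K hx (R₁ := D)
  calc J = spanSingleton D⁰ x * ((spanSingleton D⁰ x)⁻¹ * J) := by rw [← mul_assoc, hu, one_mul]
    _ ≤ spanSingleton D⁰ x * I⁻¹ := by
      refine mul_le_mul_right ((le_inv_iff_mul_le hI).mpr ?_) _
      calc (spanSingleton D⁰ x)⁻¹ * J * I = (spanSingleton D⁰ x)⁻¹ * (J * I) := mul_assoc _ _ _
        _ ≤ (spanSingleton D⁰ x)⁻¹ * spanSingleton D⁰ x := mul_le_mul_right h _
        _ = 1 := by rw [mul_comm, hu]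

end FractionalIdeal

namespace StarOperation

open FractionalIdeal

variable {D K : Type*} [CommRing D] [IsDomain D] [Field K] [Algebra D K] [IsFractionRing D K]
  (s : StarOperation D K) {I J M N : FractionalIdeal D⁰ K}

theorem star_ne_zero (hI : I ≠ 0) : s.star I ≠ 0 :=
  ne_zero_of_le hI (s.le_star I hI)

theorem star_le_star (hI : I ≠ 0) (h : I ≤ J) : s.star I ≤ s.star J :=
  s.star_mono I J hI (ne_zero_of_le hI h) h

theorem star_le_star_of_le_star (hI : I ≠ 0) (hJ : J ≠ 0) (h : I ≤ s.star J) :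
    s.star I ≤ s.star J :=
  (s.star_le_star hI h).trans_eq (s.star_star J hJ)

theorem star_le_one (hI : I ≠ 0) (h : I ≤ 1) : s.star I ≤ 1 :=
  s.star_one ▸ s.star_le_star hI h

theorem star_mul_inv_le_one (hI : I ≠ 0) : s.star (I * I⁻¹) ≤ 1 :=
  s.star_le_one (mul_ne_zero hI (inv_ne_zero hI)) (mul_inv_le_one I)

theorem star_spanSingleton {x : K} (hx : x ≠ 0) :
    s.star (spanSingleton D⁰ x) = spanSingleton D⁰ x := by
  simpa [s.star_one] using s.star_smul x hx 1 one_ne_zero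

theorem mul_star_le (hN : N ≠ 0) : M * s.star N ≤ s.star (M * N) := by
  rw [mul_le]
  intro x hx y hy
  rcases eq_or_ne x 0 with rfl | hx0
  · rw [zero_mul]
    exact zero_mem _
  have hxy : x * y ∈ s.star (spanSingleton D⁰ x * N) := by
    rw [s.star_smul x hx0 N hN]
    exact mul_mem_mul (mem_spanSingleton_self _ x) hy
  exact s.star_le_star (mul_ne_zero (spanSingleton_ne_zero_iff.mpr hx0) hN)
    (mul_le_mul_left (spanSingleton_le_iff_mem.mpr hx) N) hxy

theorem star_mul_star (hM : M ≠ 0) (hN : N ≠ 0) : s.star (M * s.star N) = s.star (M * N) :=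
  le_antisymm
    (s.star_le_star_of_le_star (mul_ne_zero hM (s.star_ne_zero hN)) (mul_ne_zero hM hN)
      (s.mul_star_le hN))
    (s.star_le_star (mul_ne_zero hM hN) (mul_le_mul_right (s.le_star N hN) M))

theorem star_star_mul (hM : M ≠ 0) (hN : N ≠ 0) : s.star (s.star M * N) = s.star (M * N) := by
  rw [mul_comm, s.star_mul_star hN hM, mul_comm]

theorem star_mul_of_star_eq_one (hM : M ≠ 0) (hN : N ≠ 0) (h : s.star N = 1) :
    s.star (M * N) = s.star M := by
  rw [← s.star_mul_star hM hN, h, mul_one]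

theorem star_sup_star (hM : M ≠ 0) (hN : N ≠ 0) :
    s.star (s.star M ⊔ s.star N) = s.star (M ⊔ N) :=
  le_antisymm
    (s.star_le_star_of_le_star (ne_zero_of_le (s.star_ne_zero hM) le_sup_left)
      (ne_zero_of_le hM le_sup_left)
      (sup_le (s.star_le_star hM le_sup_left) (s.star_le_star hN le_sup_right)))
    (s.star_le_star (ne_zero_of_le hM le_sup_left) (sup_le_sup (s.le_star M hM) (s.le_star N hN)))

theorem inv_star (hI : I ≠ 0) : (s.star I)⁻¹ = I⁻¹ := by
  refine le_antisymm (inv_anti_mono hI (s.star_ne_zero hI) (s.le_star I hI)) ?_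
  rw [le_inv_iff_mul_le (s.star_ne_zero hI)]
  calc I⁻¹ * s.star I ≤ s.star (I⁻¹ * I) := s.mul_star_le hI
    _ ≤ 1 := by rw [mul_comm]; exact s.star_mul_inv_le_one hI

theorem star_inv (hI : I ≠ 0) : s.star I⁻¹ = I⁻¹ := by
  refine le_antisymm ?_ (s.le_star _ (inv_ne_zero hI))
  rw [le_inv_iff_mul_le hI, mul_comm]
  exact (s.mul_star_le (inv_ne_zero hI)).trans (s.star_mul_inv_le_one hI)

def IsInvertible (I : FractionalIdeal D⁰ K) : Prop :=
  s.star (I * I⁻¹) = 1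

theorem isInvertible_spanSingleton {x : K} (hx : x ≠ 0) :
    s.IsInvertible (spanSingleton D⁰ x) := by
  rw [IsInvertible, spanSingleton_mul_inv K hx, s.star_one]

variable {s}

theorem IsInvertible.of_star_eq (hJ : s.IsInvertible J) (hI0 : I ≠ 0) (hJ0 : J ≠ 0)
    (h : s.star I = s.star J) : s.IsInvertible I := by
  rw [IsInvertible, ← s.star_star_mul hI0 (inv_ne_zero hI0), ← s.inv_star hI0, h,
    s.inv_star hJ0, s.star_star_mul hJ0 (inv_ne_zero hJ0)]
  exact hJ

theorem IsInvertible.star (hI : s.IsInvertible I) (hI0 : I ≠ 0) : s.IsInvertible (s.star I) :=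
  hI.of_star_eq (s.star_ne_zero hI0) hI0 (s.star_star I hI0)

theorem IsInvertible.star_mul_mul_inv (hM : s.IsInvertible M) (hM0 : M ≠ 0) (hN0 : N ≠ 0) :
    s.star (N * M * M⁻¹) = s.star N := by
  rw [mul_assoc]
  exact s.star_mul_of_star_eq_one hN0 (mul_ne_zero hM0 (inv_ne_zero hM0)) hM

theorem IsInvertible.mul (hI : s.IsInvertible I) (hJ : s.IsInvertible J) (hI0 : I ≠ 0)
    (hJ0 : J ≠ 0) : s.IsInvertible (I * J) := by
  have hIJ0 := mul_ne_zero hI0 hJ0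
  have hinv : I⁻¹ * J⁻¹ ≤ (I * J)⁻¹ := by
    rw [le_inv_iff_mul_le hIJ0]
    calc I⁻¹ * J⁻¹ * (I * J) = I * I⁻¹ * (J * J⁻¹) := by ring
      _ ≤ 1 := mul_le_one' (mul_inv_le_one I) (mul_inv_le_one J)
  refine le_antisymm (s.star_mul_inv_le_one hIJ0) ?_
  calc 1 = s.star (I * I⁻¹ * (J * J⁻¹)) :=
        ((s.star_mul_of_star_eq_one (mul_ne_zero hI0 (inv_ne_zero hI0))
          (mul_ne_zero hJ0 (inv_ne_zero hJ0)) hJ).trans hI).symm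
    _ = s.star (I * J * (I⁻¹ * J⁻¹)) := by congr 1; ring
    _ ≤ s.star (I * J * (I * J)⁻¹) :=
        s.star_le_star (mul_ne_zero hIJ0 (mul_ne_zero (inv_ne_zero hI0) (inv_ne_zero hJ0)))
          (mul_le_mul_right hinv _)

theorem IsInvertible.inv (hI : s.IsInvertible I) (hI0 : I ≠ 0) : s.IsInvertible I⁻¹ := by
  refine le_antisymm (s.star_mul_inv_le_one (inv_ne_zero hI0)) ?_
  calc 1 = s.star (I * I⁻¹) := hI.symm
    _ ≤ s.star (I⁻¹ * I⁻¹⁻¹) := by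
        rw [mul_comm]
        refine s.star_le_star (mul_ne_zero (inv_ne_zero hI0) hI0) (mul_le_mul_right ?_ _)
        rw [le_inv_iff_mul_le (inv_ne_zero hI0)]
        exact mul_inv_le_one I

theorem IsInvertible.le_star_of_mul_le (hM : s.IsInvertible M) (hM0 : M ≠ 0) (hN0 : N ≠ 0)
    {Z : FractionalIdeal D⁰ K} (h : Z * M ≤ s.star (N * M)) : Z ≤ s.star N := by
  rcases eq_or_ne Z 0 with rfl | hZ0
  · exact zero_le _
  calc Z ≤ s.star Z := s.le_star Z hZ0
    _ = s.star (Z * M * M⁻¹) := (hM.star_mul_mul_inv hM0 hZ0).symm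
    _ ≤ s.star (s.star (N * M) * M⁻¹) :=
        s.star_le_star (mul_ne_zero (mul_ne_zero hZ0 hM0) (inv_ne_zero hM0))
          (mul_le_mul_left h _)
    _ = s.star (N * M * M⁻¹) := s.star_star_mul (mul_ne_zero hN0 hM0) (inv_ne_zero hM0)
    _ = s.star N := hM.star_mul_mul_inv hM0 hN0

theorem IsInvertible.inv_inv_le_star (hM : s.IsInvertible M) (hM0 : M ≠ 0) :
    M⁻¹⁻¹ ≤ s.star M := by
  refine (hM.inv hM0).le_star_of_mul_le (inv_ne_zero hM0) hM0 ?_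
  rw [hM, mul_comm]
  exact mul_inv_le_one _

theorem IsSharp.exists_star_eq_star_mul (hs : s.IsSharp) {I A B : FractionalIdeal D⁰ K}
    (hI : I ≤ 1) (hA0 : A ≠ 0) (hA : A ≤ 1) (hB0 : B ≠ 0) (hB : B ≤ 1) (hAB : A * B ≤ I) :
    ∃ H J : FractionalIdeal D⁰ K, H ≠ 0 ∧ H ≤ 1 ∧ J ≠ 0 ∧ J ≤ 1 ∧
      s.star I = s.star (H * J) ∧ A ≤ s.star H ∧ B ≤ s.star J := by
  have hI0 : I ≠ 0 := ne_zero_of_le (mul_ne_zero hA0 hB0) hAB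
  obtain ⟨I, rfl⟩ := le_one_iff_exists_coeIdeal.mp hI
  obtain ⟨A, rfl⟩ := le_one_iff_exists_coeIdeal.mp hA
  obtain ⟨B, rfl⟩ := le_one_iff_exists_coeIdeal.mp hB
  rw [← coeIdeal_mul, coeIdeal_le_coeIdeal] at hAB
  obtain ⟨H, J, hH0, hJ0, hIHJ, hAH, hBJ⟩ :=
    hs I A B (coeIdeal_ne_zero.mp hI0) (coeIdeal_ne_zero.mp hA0) (coeIdeal_ne_zero.mp hB0) hAB
  exact ⟨H, J, coeIdeal_ne_zero.mpr hH0, coeIdeal_le_one, coeIdeal_ne_zero.mpr hJ0,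
    coeIdeal_le_one, hIHJ, hAH, hBJ⟩

theorem IsSharp.isInvertible_of_inv_inv_le (hs : s.IsSharp) {X : FractionalIdeal D⁰ K}
    (hX0 : X ≠ 0) (hX : X ≤ 1) (hXv : X⁻¹⁻¹ ≤ X) : s.IsInvertible X := by
  obtain ⟨a, ha0, haX⟩ := exists_ne_zero_mem_isInteger hX0
  have hx : algebraMap D K a ≠ 0 := by simpa using ha0
  set x := algebraMap D K a
  have hu0 : spanSingleton D⁰ x ≠ 0 := spanSingleton_ne_zero_iff.mpr hx
  have huX : spanSingleton D⁰ x ≤ X := spanSingleton_le_iff_mem.mpr haX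
  have hXinv0 : X⁻¹ ≠ 0 := inv_ne_zero hX0
  have hY : spanSingleton D⁰ x * X⁻¹ ≤ 1 := (mul_le_mul_left huX _).trans (mul_inv_le_one X)
  have hYs : s.star (spanSingleton D⁰ x * X⁻¹) = spanSingleton D⁰ x * X⁻¹ := by
    rw [s.star_smul x hx _ hXinv0, s.star_inv hX0]
  obtain ⟨H, J, hH0, -, hJ0, -, hxHJ, hXH, hYJ⟩ :=
    hs.exists_star_eq_star_mul (huX.trans hX) hX0 hX (mul_ne_zero hu0 hXinv0) hY
      (by rw [mul_left_comm]; exact mul_le_of_le_one_right' (mul_inv_le_one X))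
  rw [s.star_spanSingleton hx] at hxHJ
  have hJX : J * X ≤ spanSingleton D⁰ x := calc
    J * X ≤ J * s.star H := mul_le_mul_right hXH J
    _ ≤ s.star (J * H) := s.mul_star_le hH0
    _ = spanSingleton D⁰ x := by rw [mul_comm, ← hxHJ]
  have hJs : s.star J = spanSingleton D⁰ x * X⁻¹ :=
    le_antisymm (hYs ▸ s.star_le_star hJ0 (le_spanSingleton_mul_inv hx hX0 hJX)) hYJ
  have hHX : s.star (H * X⁻¹) = 1 := by
    refine (IsUnit.of_mul_eq_one _ (spanSingleton_mul_inv K hx)).mul_left_cancel ?_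
    rw [mul_one, ← s.star_smul x hx _ (mul_ne_zero hH0 hXinv0), mul_left_comm, ← hJs,
      s.star_mul_star hH0 hJ0, ← hxHJ]
  have hHX' : H ≤ X := ((le_inv_iff_mul_le hXinv0).mpr
    ((s.le_star _ (mul_ne_zero hH0 hXinv0)).trans hHX.le)).trans hXv
  refine le_antisymm (s.star_mul_inv_le_one hX0) ?_
  calc 1 = s.star (H * X⁻¹) := hHX.symm
    _ ≤ s.star (X * X⁻¹) := s.star_le_star (mul_ne_zero hH0 hXinv0) (mul_le_mul_left hHX' _)

theorem inf_le_star_mul_of_isVCoprime {p q : FractionalIdeal D⁰ K} (hp : s.IsInvertible p)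
    (hq : s.IsInvertible q) (hp0 : p ≠ 0) (hq0 : q ≠ 0) (hpq : IsVCoprime p q) :
    p ⊓ q ≤ s.star (p * q) := by
  have hZ0 : p ⊓ q ≠ 0 := inf_ne_zero hp0 hq0
  have hM : (p ⊓ q) * p⁻¹ * q⁻¹ ≤ 1 := by
    apply hpq
    · calc (p ⊓ q) * p⁻¹ * q⁻¹ * p = (p ⊓ q) * q⁻¹ * (p * p⁻¹) := by ring
        _ ≤ 1 := mul_le_one' ((mul_le_mul_left inf_le_right _).trans (mul_inv_le_one q))
            (mul_inv_le_one p)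
    · calc (p ⊓ q) * p⁻¹ * q⁻¹ * q = (p ⊓ q) * p⁻¹ * (q * q⁻¹) := by ring
        _ ≤ 1 := mul_le_one' ((mul_le_mul_left inf_le_left _).trans (mul_inv_le_one p))
            (mul_inv_le_one q)
  have hZp0 : (p ⊓ q) * p * p⁻¹ ≠ 0 := mul_ne_zero (mul_ne_zero hZ0 hp0) (inv_ne_zero hp0)
  calc p ⊓ q ≤ s.star (p ⊓ q) := s.le_star _ hZ0
    _ = s.star ((p ⊓ q) * p * p⁻¹ * q * q⁻¹) := by
        rw [hq.star_mul_mul_inv hq0 hZp0, hp.star_mul_mul_inv hp0 hZ0]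
    _ = s.star ((p ⊓ q) * p⁻¹ * q⁻¹ * (p * q)) := by congr 1; ring
    _ ≤ s.star (p * q) :=
        s.star_le_star (mul_ne_zero (mul_ne_zero (mul_ne_zero hZ0 (inv_ne_zero hp0))
          (inv_ne_zero hq0)) (mul_ne_zero hp0 hq0)) (mul_le_of_le_one_left' hM)

theorem IsStable.le_star_of_mul_le_star_sup (hst : s.IsStable)
    {m A B C z : FractionalIdeal D⁰ K} (hm : s.IsInvertible m) (hm0 : m ≠ 0)
    (hms : s.star m = m) (hA0 : A ≠ 0) (hC0 : C ≠ 0) (hAm : A ≤ m)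
    (hABC : A ⊔ B ⊓ m ≤ s.star (m * C)) (hz : z ≤ 1) (hzm : z * m ≤ s.star (A ⊔ B)) :
    z ≤ s.star C := by
  have hAB0 : A ⊔ B ≠ 0 := ne_zero_of_le hA0 le_sup_left
  refine hm.le_star_of_mul_le hm0 hC0 ?_
  calc z * m ≤ s.star (A ⊔ B) ⊓ s.star m :=
        le_inf hzm ((mul_le_of_le_one_left' hz).trans_eq hms.symm)
    _ = s.star (A ⊔ B ⊓ m) := by rw [← hst _ _ hAB0 hm0, sup_inf_assoc_of_le B hAm]
    _ ≤ s.star (C * m) := by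
        rw [mul_comm]
        exact s.star_le_star_of_le_star (ne_zero_of_le hA0 le_sup_left) (mul_ne_zero hm0 hC0)
          hABC

section Sharp

variable {p q : FractionalIdeal D⁰ K} (hst : s.IsStable) (hs : s.IsSharp)
  (hp : s.IsInvertible p) (hq : s.IsInvertible q) (hp0 : p ≠ 0) (hq0 : q ≠ 0)
  (hp1 : p ≤ 1) (hq1 : q ≤ 1) (hps : s.star p = p) (hqs : s.star q = q)
  (hpq : IsVCoprime p q)
include hst hs hp hq hp0 hq0 hp1 hq1 hqs hpq

theorem le_star_sup_mul_sup_of_isVCoprime : p ≤ s.star ((p ⊔ q) * (p ⊔ q)) := by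
  have hpq0 : p ⊔ q ≠ 0 := ne_zero_of_le hp0 le_sup_left
  have hle : ∀ z, z ≤ 1 → z * q ≤ s.star (q * q ⊔ p) → z ≤ s.star (p ⊔ q) := by
    refine fun z hz hzq => hst.le_star_of_mul_le_star_sup hq hq0 hqs (mul_ne_zero hq0 hq0) hpq0
      (mul_le_of_le_one_left' hq1) (sup_le ?_ ?_) hz hzq
    · exact (mul_le_mul_right le_sup_right q).trans (s.le_star _ (mul_ne_zero hq0 hpq0))
    · calc p ⊓ q ≤ s.star (p * q) := s.inf_le_star_mul_of_isVCoprime hp hq hp0 hq0 hpq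
        _ ≤ s.star (q * (p ⊔ q)) := s.star_le_star (mul_ne_zero hp0 hq0)
            (by rw [mul_comm]; exact mul_le_mul_right le_sup_left q)
  obtain ⟨H, J, hH0, hH1, hJ0, hJ1, hHJ, hqH, hqJ⟩ :=
    hs.exists_star_eq_star_mul (sup_le (mul_le_one' hq1 hq1) hp1) hq0 hq1 hq0 hq1 le_sup_left
  have hH : H ≤ s.star (p ⊔ q) := hle H hH1 <| calc
    H * q ≤ H * s.star J := mul_le_mul_right hqJ H
    _ ≤ s.star (H * J) := s.mul_star_le hJ0
    _ = s.star (q * q ⊔ p) := hHJ.symm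
  have hJ : J ≤ s.star (p ⊔ q) := hle J hJ1 <| calc
    J * q ≤ J * s.star H := mul_le_mul_right hqH J
    _ ≤ s.star (J * H) := s.mul_star_le hH0
    _ = s.star (q * q ⊔ p) := by rw [mul_comm, hHJ]
  calc p ≤ s.star (q * q ⊔ p) := le_sup_right.trans (s.le_star _ (ne_zero_of_le hp0 le_sup_right))
    _ = s.star (H * J) := hHJ
    _ ≤ s.star (s.star (p ⊔ q) * s.star (p ⊔ q)) :=
        s.star_le_star (mul_ne_zero hH0 hJ0) (mul_le_mul' hH hJ)
    _ = s.star ((p ⊔ q) * (p ⊔ q)) := by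
        rw [s.star_mul_star (s.star_ne_zero hpq0) hpq0, s.star_star_mul hpq0 hpq0]

include hps

theorem star_sup_eq_one_of_isVCoprime : s.star (p ⊔ q) = 1 := by
  have hpq0 : p ⊔ q ≠ 0 := ne_zero_of_le hp0 le_sup_left
  have hpq1 : p ⊔ q ≤ 1 := sup_le hp1 hq1
  have hsq : (p ⊔ q) * (p ⊔ q) ≤ p * (p ⊔ q) ⊔ q * q := calc
    (p ⊔ q) * (p ⊔ q) = p * (p ⊔ q) ⊔ (p * q ⊔ q * q) := by simp only [sup_eq_add]; ring
    _ ≤ p * (p ⊔ q) ⊔ q * q := sup_le le_sup_left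
        (sup_le ((mul_le_mul_right le_sup_right p).trans le_sup_left) le_sup_right)
  refine le_antisymm (s.star_le_one hpq0 hpq1) <|
    hst.le_star_of_mul_le_star_sup (B := q * q) hp hp0 hps (mul_ne_zero hp0 hpq0) hpq0
      (mul_le_of_le_one_right' hpq1) (sup_le (s.le_star _ (mul_ne_zero hp0 hpq0)) ?_) le_rfl ?_
  · calc q * q ⊓ p ≤ s.star (q * q * p) :=
          s.inf_le_star_mul_of_isVCoprime (hq.mul hq hq0 hq0) hp (mul_ne_zero hq0 hq0) hp0
            (hpq.mul_self_right hq1).symm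
      _ ≤ s.star (p * (p ⊔ q)) := s.star_le_star (mul_ne_zero (mul_ne_zero hq0 hq0) hp0) <| by
          rw [mul_comm]
          exact mul_le_mul_right ((mul_le_of_le_one_left' hq1).trans le_sup_right) p
  · rw [one_mul]
    exact (s.le_star_sup_mul_sup_of_isVCoprime hst hs hp hq hp0 hq0 hp1 hq1 hqs hpq).trans
      (s.star_le_star (mul_ne_zero hpq0 hpq0) hsq)

end Sharp

section TwoGenerated

variable {α β : FractionalIdeal D⁰ K} (hs : s.IsSharp) (hα : s.IsInvertible α)
  (hβ : s.IsInvertible β) (hα0 : α ≠ 0) (hβ0 : β ≠ 0) (hα1 : α ≤ 1)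
  (hαs : s.star α = α) (hβs : s.star β = β)
include hs hα hβ hα0 hβ0 hα1 hαs hβs

theorem isInvertible_inv_sup : s.IsInvertible (α ⊔ β)⁻¹ := by
  have hU0 : α ⊔ β ≠ 0 := ne_zero_of_le hα0 le_sup_left
  have hW0 : (α ⊔ β)⁻¹ ≠ 0 := inv_ne_zero hU0
  have hX0 : α ⊓ β ≠ 0 := inf_ne_zero hα0 hβ0
  have hX : s.IsInvertible (α ⊓ β) := hs.isInvertible_of_inv_inv_le hX0 (inf_le_left.trans hα1)
    (le_inf ((inv_inv_mono hX0 inf_le_left).trans ((hα.inv_inv_le_star hα0).trans_eq hαs))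
      ((inv_inv_mono hX0 inf_le_right).trans ((hβ.inv_inv_le_star hβ0).trans_eq hβs)))
  have hV0 : (α ⊓ β) * α⁻¹ * β⁻¹ ≠ 0 :=
    mul_ne_zero (mul_ne_zero hX0 (inv_ne_zero hα0)) (inv_ne_zero hβ0)
  have hV : s.IsInvertible ((α ⊓ β) * α⁻¹ * β⁻¹) :=
    (hX.mul (hα.inv hα0) hX0 (inv_ne_zero hα0)).mul (hβ.inv hβ0)
      (mul_ne_zero hX0 (inv_ne_zero hα0)) (inv_ne_zero hβ0)
  have hVW : (α ⊓ β) * α⁻¹ * β⁻¹ ≤ (α ⊔ β)⁻¹ := by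
    rw [le_inv_iff_mul_le hU0]
    calc (α ⊓ β) * α⁻¹ * β⁻¹ * (α ⊔ β)
        = (α ⊓ β) * β⁻¹ * (α * α⁻¹) ⊔ (α ⊓ β) * α⁻¹ * (β * β⁻¹) := by
          simp only [sup_eq_add]; ring
      _ ≤ 1 := sup_le
          (mul_le_one' ((mul_le_mul_left inf_le_right _).trans (mul_inv_le_one β))
            (mul_inv_le_one α))
          (mul_le_one' ((mul_le_mul_left inf_le_left _).trans (mul_inv_le_one α))
            (mul_inv_le_one β))
  have hWV : (α ⊔ β)⁻¹ ≤ s.star ((α ⊓ β) * α⁻¹ * β⁻¹) := by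
    refine (hα.mul hβ hα0 hβ0).le_star_of_mul_le (mul_ne_zero hα0 hβ0) hV0 ?_
    have hWα : (α ⊔ β)⁻¹ * α ≤ 1 := (mul_le_mul_right le_sup_left _).trans
      (by rw [mul_comm]; exact mul_inv_le_one _)
    have hWβ : (α ⊔ β)⁻¹ * β ≤ 1 := (mul_le_mul_right le_sup_right _).trans
      (by rw [mul_comm]; exact mul_inv_le_one _)
    calc (α ⊔ β)⁻¹ * (α * β) ≤ α ⊓ β := le_inf
          (by rw [mul_comm α β, ← mul_assoc]; exact mul_le_of_le_one_left' hWβ)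
          (by rw [← mul_assoc]; exact mul_le_of_le_one_left' hWα)
      _ ≤ s.star (α ⊓ β) := s.le_star _ hX0
      _ = s.star ((α ⊓ β) * α * α⁻¹ * β * β⁻¹) := by
          rw [hβ.star_mul_mul_inv hβ0 (mul_ne_zero (mul_ne_zero hX0 hα0) (inv_ne_zero hα0)),
            hα.star_mul_mul_inv hα0 hX0]
      _ = s.star ((α ⊓ β) * α⁻¹ * β⁻¹ * (α * β)) := by congr 1; ring
  exact hV.of_star_eq hW0 hV0
    (le_antisymm (s.star_le_star_of_le_star hW0 hV0 hWV) (s.star_le_star hV0 hVW))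

theorem isInvertible_sup_of_star_eq_self (hst : s.IsStable) : s.IsInvertible (α ⊔ β) := by
  have hU0 : α ⊔ β ≠ 0 := ne_zero_of_le hα0 le_sup_left
  have hW0 : (α ⊔ β)⁻¹ ≠ 0 := inv_ne_zero hU0
  have hW : s.IsInvertible (α ⊔ β)⁻¹ := s.isInvertible_inv_sup hs hα hβ hα0 hβ0 hα1 hαs hβs
  have hαW0 : α * (α ⊔ β)⁻¹ ≠ 0 := mul_ne_zero hα0 hW0
  have hβW0 : β * (α ⊔ β)⁻¹ ≠ 0 := mul_ne_zero hβ0 hW0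
  have hαW : α * (α ⊔ β)⁻¹ ≤ 1 := (mul_le_mul_left le_sup_left _).trans (mul_inv_le_one _)
  have hβW : β * (α ⊔ β)⁻¹ ≤ 1 := (mul_le_mul_left le_sup_right _).trans (mul_inv_le_one _)
  have hcop : IsVCoprime (s.star (β * (α ⊔ β)⁻¹)) (s.star (α * (α ⊔ β)⁻¹)) := by
    intro Z hZβ hZα
    have hZW : Z * (α ⊔ β)⁻¹ ≤ (α ⊔ β)⁻¹ := by
      rw [le_inv_iff_mul_le hU0]
      calc Z * (α ⊔ β)⁻¹ * (α ⊔ β) = Z * (α * (α ⊔ β)⁻¹) ⊔ Z * (β * (α ⊔ β)⁻¹) := by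
            simp only [sup_eq_add]; ring
        _ ≤ 1 := sup_le ((mul_le_mul_right (s.le_star _ hαW0) Z).trans hZα)
            ((mul_le_mul_right (s.le_star _ hβW0) Z).trans hZβ)
    simpa [s.star_one] using
      hW.le_star_of_mul_le hW0 one_ne_zero (by rwa [one_mul, s.star_inv hU0])
  have h := s.star_sup_eq_one_of_isVCoprime hst hs ((hβ.mul hW hβ0 hW0).star hβW0)
    ((hα.mul hW hα0 hW0).star hαW0) (s.star_ne_zero hβW0) (s.star_ne_zero hαW0)
    (s.star_le_one hβW0 hβW) (s.star_le_one hαW0 hαW) (s.star_star _ hβW0) (s.star_star _ hαW0)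
    hcop
  rw [s.star_sup_star hβW0 hαW0] at h
  rw [IsInvertible, ← h]
  congr 1
  simp only [sup_eq_add]
  ring

end TwoGenerated

theorem isInvertible_sup (hst : s.IsStable) (hs : s.IsSharp) (hI : s.IsInvertible I)
    (hJ : s.IsInvertible J) (hI0 : I ≠ 0) (hJ0 : J ≠ 0) (hI1 : I ≤ 1) :
    s.IsInvertible (I ⊔ J) :=
  (s.isInvertible_sup_of_star_eq_self hs (hI.star hI0) (hJ.star hJ0) (s.star_ne_zero hI0)
      (s.star_ne_zero hJ0) (s.star_le_one hI0 hI1) (s.star_star I hI0)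
      (s.star_star J hJ0) hst).of_star_eq
    (ne_zero_of_le hI0 le_sup_left) (ne_zero_of_le (s.star_ne_zero hI0) le_sup_left)
    (s.star_sup_star hI0 hJ0).symm

end StarOperation

/-- Let `*` be a stable star operation on `D` such that `D` is
`*`-sharp. Then every finitely generated nonzero ideal of `D` is `*`-invertible. -/
theorem statement8 (D : Type*) [CommRing D] [IsDomain D]
    (K : Type*) [Field K] [Algebra D K] [IsFractionRing D K]
    (s : StarOperation D K) (hst : s.IsStable) (hsharp : s.IsSharp) :
    ∀ I : Ideal D, I ≠ 0 → I.FG →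
      s.star ((I : FractionalIdeal D⁰ K) * (I : FractionalIdeal D⁰ K)⁻¹) = 1 := by
  intro I hI0 hI
  induction I, hI using Submodule.fg_induction with
  | singleton x =>
    have hx : x ≠ 0 := fun h => hI0 (Submodule.span_singleton_eq_bot.mpr h)
    rw [Ideal.submodule_span_eq, FractionalIdeal.coeIdeal_span_singleton]
    exact s.isInvertible_spanSingleton (by simpa using hx)
  | sup N₁ N₂ _ _ ih₁ ih₂ =>
    rcases eq_or_ne N₁ ⊥ with rfl | h₁
    · rw [bot_sup_eq] at hI0 ⊢
      exact ih₂ hI0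
    rcases eq_or_ne N₂ ⊥ with rfl | h₂
    · rw [sup_bot_eq] at hI0 ⊢
      exact ih₁ hI0
    rw [FractionalIdeal.coeIdeal_sup, ← FractionalIdeal.sup_eq_add]
    exact s.isInvertible_sup hst hsharp (ih₁ h₁) (ih₂ h₂)
      (FractionalIdeal.coeIdeal_ne_zero.mpr h₁) (FractionalIdeal.coeIdeal_ne_zero.mpr h₂)
      FractionalIdeal.coeIdeal_le_one
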